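/- Define α_j = (1/(2 n^{k/2}))·max((n/p)^{k/(k+1)} − j/p, 0) for a constant integer k ≥ 2 and positive integers n, p with p ≤ n and n sufficiently large. Then for every s ≥ 0 and every J with 1 ≤ |J| ≤ p: ∑_{ℓ=0}^{k−1} binom(s+|J|, ℓ)·(α_s − α_{s+|J|})² + |J|·binom(s+|J|−1, k−1)·α_s² ≤ 1. -/

import Mathlib

/-!
Write `α_j = c · max (A − j/p) 0` with `c = 1/(2 n^{k/2})` and `A = (n/p)^{k/(k+1)}`, so that
`c² = 1/(4 n^k)` and `p^k A^{k+1} = n^k`. If `s ≥ pA` both terms vanish, so assume `s < pA ≤ n`.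
Since `x ↦ max x 0` is 1-Lipschitz and `t ≤ p`, `(α_s − α_{s+t})² ≤ c²`, while the binomial sum is
at most `k (2n)^{k−1}`; their product is at most `k 2^k / (8n) ≤ 1/2` for large `n`. In the second
term `binom(s+t−1, k−1) ≤ (2pA)^{k−1}/(k−1)!` and `α_s ≤ cA`, which makes it at most
`2^{k−1} p^k A^{k+1} c² / (k−1)! = 2^{k−1}/(4 (k−1)!) ≤ 1/2`.
-/

/-- The dual learning-graph solution for `k`-sum:
`α_j = (1/(2 n^{k/2})) · max((n/p)^{k/(k+1)} − j/p, 0)`. -/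
noncomputable def alphaKS (k n p : ℕ) (j : ℕ) : ℝ :=
  (1 / (2 * (n : ℝ) ^ ((k : ℝ) / 2))) *
    max (((n : ℝ) / p) ^ ((k : ℝ) / ((k : ℝ) + 1)) - (j : ℝ) / p) 0

open Finset
open scoped Nat

noncomputable def kSumScale (k n : ℕ) : ℝ := 1 / (2 * (n : ℝ) ^ ((k : ℝ) / 2))

noncomputable def kSumThreshold (k n p : ℕ) : ℝ := ((n : ℝ) / p) ^ ((k : ℝ) / ((k : ℝ) + 1))

theorem Nat.two_pow_le_two_mul_factorial {m : ℕ} (hm : 1 ≤ m) : 2 ^ m ≤ 2 * m ! := by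
  obtain ⟨j, rfl⟩ := Nat.exists_eq_add_of_le' hm
  have h : 2 ^ j ≤ (j + 1)! := by
    simpa [add_comm] using Nat.factorial_mul_pow_le_factorial (m := 1) (n := j)
  rw [pow_succ, mul_comm]
  exact Nat.mul_le_mul_left 2 h

theorem Nat.sum_range_choose_le_mul_pow {m N : ℕ} (k : ℕ) (hmN : m ≤ N) (hN : 1 ≤ N) :
    ∑ ℓ ∈ range k, m.choose ℓ ≤ k * N ^ (k - 1) := by
  calc ∑ ℓ ∈ range k, m.choose ℓ
      ≤ ∑ _ℓ ∈ range k, N ^ (k - 1) := by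
        refine sum_le_sum fun ℓ hℓ => ?_
        calc m.choose ℓ ≤ m ^ ℓ := Nat.choose_le_pow _ _
          _ ≤ N ^ ℓ := Nat.pow_le_pow_left hmN _
          _ ≤ N ^ (k - 1) := Nat.pow_le_pow_right hN (by have := mem_range.1 hℓ; omega)
    _ = k * N ^ (k - 1) := by rw [sum_const, card_range, smul_eq_mul]

theorem alphaKS_eq (k n p j : ℕ) :
    alphaKS k n p j = kSumScale k n * max (kSumThreshold k n p - j / p) 0 := rfl

section KSum

variable {k n p : ℕ}

theorem kSumScale_nonneg : 0 ≤ kSumScale k n := by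
  unfold kSumScale; positivity

theorem kSumScale_sq (k n : ℕ) : kSumScale k n ^ 2 = 1 / (4 * (n : ℝ) ^ k) := by
  have h : ((n : ℝ) ^ ((k : ℝ) / 2)) ^ 2 = (n : ℝ) ^ k := by
    rw [← Real.rpow_natCast _ 2, ← Real.rpow_mul n.cast_nonneg, ← Real.rpow_natCast]
    norm_num
  rw [kSumScale, div_pow, mul_pow, h]
  norm_num

theorem kSumThreshold_nonneg : 0 ≤ kSumThreshold k n p := by
  unfold kSumThreshold; positivity

theorem pow_mul_kSumThreshold_pow (hp : p ≠ 0) :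
    (p : ℝ) ^ k * kSumThreshold k n p ^ (k + 1) = (n : ℝ) ^ k := by
  have h : kSumThreshold k n p ^ (k + 1) = ((n : ℝ) / p) ^ k := by
    rw [kSumThreshold, ← Real.rpow_natCast _ (k + 1), ← Real.rpow_mul (by positivity),
      ← Real.rpow_natCast _ k]
    congr 1
    push_cast
    field_simp
  rw [h, ← mul_pow, mul_div_cancel₀ _ (Nat.cast_ne_zero.2 hp)]

theorem one_le_kSumThreshold (hp : 0 < p) (hpn : p ≤ n) : 1 ≤ kSumThreshold k n p :=
  Real.one_le_rpow ((one_le_div (by exact_mod_cast hp)).2 (by exact_mod_cast hpn)) (by positivity)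

theorem mul_kSumThreshold_le (hp : 0 < p) (hpn : p ≤ n) : p * kSumThreshold k n p ≤ n := by
  have hp' : (0 : ℝ) < p := by exact_mod_cast hp
  have hA : kSumThreshold k n p ≤ (n : ℝ) / p := by
    refine Real.rpow_le_self_of_one_le ((one_le_div hp').2 (by exact_mod_cast hpn)) ?_
    rw [div_le_one (by positivity)]
    linarith
  rw [le_div_iff₀ hp'] at hA
  linarith

theorem alphaKS_nonneg (j : ℕ) : 0 ≤ alphaKS k n p j :=
  mul_nonneg kSumScale_nonneg (le_max_right _ _)

theorem alphaKS_le (j : ℕ) : alphaKS k n p j ≤ kSumScale k n * kSumThreshold k n p := by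
  rw [alphaKS_eq]
  refine mul_le_mul_of_nonneg_left (max_le ?_ kSumThreshold_nonneg) kSumScale_nonneg
  have : (0 : ℝ) ≤ j / p := by positivity
  linarith

theorem alphaKS_eq_zero {j : ℕ} (hp : 0 < p) (hj : p * kSumThreshold k n p ≤ j) :
    alphaKS k n p j = 0 := by
  rw [alphaKS_eq, max_eq_right, mul_zero]
  rw [sub_nonpos, le_div_iff₀ (by exact_mod_cast hp)]
  linarith

theorem alphaKS_sub_alphaKS_sq_le {s t : ℕ} (htp : t ≤ p) :
    (alphaKS k n p s - alphaKS k n p (s + t)) ^ 2 ≤ 1 / (4 * (n : ℝ) ^ k) := by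
  set A := kSumThreshold k n p
  have hmax : |max (A - s / p) 0 - max (A - (s + t : ℕ) / p) 0| ≤ 1 := by
    have hdiff : (A - s / p) - (A - (s + t : ℕ) / p) = (t : ℝ) / p := by
      push_cast
      ring
    refine (abs_max_sub_max_le_abs _ _ _).trans ?_
    rw [hdiff, abs_of_nonneg (by positivity)]
    exact div_le_one_of_le₀ (by exact_mod_cast htp) (Nat.cast_nonneg _)
  rw [alphaKS_eq, alphaKS_eq, ← mul_sub, mul_pow, ← kSumScale_sq k n, ← sq_abs (_ - _)]
  refine mul_le_of_le_one_right (sq_nonneg _) ?_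
  exact pow_le_one₀ (abs_nonneg _) hmax

theorem sum_choose_mul_alphaKS_sub_sq_le {s t : ℕ} (hk : 1 ≤ k) (hn : k * 2 ^ k ≤ 4 * n)
    (hsn : s ≤ n) (htp : t ≤ p) (hpn : p ≤ n) :
    (∑ ℓ ∈ range k, ((s + t).choose ℓ : ℝ)) * (alphaKS k n p s - alphaKS k n p (s + t)) ^ 2
      ≤ 1 / 2 := by
  obtain ⟨m, rfl⟩ := Nat.exists_eq_add_of_le' hk
  have hn0 : 0 < n := by
    have := Nat.one_le_two_pow (n := m + 1)
    nlinarith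
  have hsum : (∑ ℓ ∈ range (m + 1), ((s + t).choose ℓ : ℝ))
      ≤ (m + 1 : ℕ) * (2 * (n : ℝ)) ^ m := by
    exact_mod_cast Nat.sum_range_choose_le_mul_pow (m + 1) (N := 2 * n) (by omega) (by omega)
  have hn' : ((m + 1 : ℕ) : ℝ) * 2 ^ (m + 1) ≤ 4 * n := by exact_mod_cast hn
  have hn0' : (0 : ℝ) < n := by exact_mod_cast hn0
  calc _ ≤ (m + 1 : ℕ) * (2 * (n : ℝ)) ^ m * (1 / (4 * (n : ℝ) ^ (m + 1))) :=
        mul_le_mul hsum (alphaKS_sub_alphaKS_sq_le htp) (sq_nonneg _) (by positivity)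
    _ = ((m + 1 : ℕ) * 2 ^ (m + 1)) / (8 * n) := by
        field_simp
        ring
    _ ≤ 1 / 2 := by
        rw [div_le_div_iff₀ (by positivity) (by norm_num)]
        linarith

theorem mul_choose_mul_alphaKS_sq_le {s t : ℕ} (hk : 2 ≤ k) (hp : 0 < p)
    (hs : (s : ℝ) < p * kSumThreshold k n p) (htp : t ≤ p) (hpn : p ≤ n) :
    (t : ℝ) * ((s + t - 1).choose (k - 1) : ℝ) * alphaKS k n p s ^ 2 ≤ 1 / 2 := by
  obtain ⟨m, rfl⟩ := Nat.exists_eq_add_of_le' hk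
  set A := kSumThreshold (m + 2) n p
  have hp' : (0 : ℝ) < p := by exact_mod_cast hp
  have htp' : (t : ℝ) ≤ p := by exact_mod_cast htp
  have hn0 : (n : ℝ) ≠ 0 := by exact_mod_cast (hp.trans_le hpn).ne'
  have hA : 1 ≤ A := one_le_kSumThreshold hp hpn
  have hst : ((s + t - 1 : ℕ) : ℝ) ≤ 2 * p * A := by
    have : ((s + t - 1 : ℕ) : ℝ) ≤ s + t := by exact_mod_cast Nat.sub_le (s + t) 1
    nlinarith
  have hchoose : ((s + t - 1).choose (m + 1) : ℝ) ≤ (2 * p * A) ^ (m + 1) / (m + 1)! :=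
    (Nat.choose_le_pow_div _ _).trans (by gcongr)
  have hα : alphaKS (m + 2) n p s ^ 2 ≤ A ^ 2 / (4 * (n : ℝ) ^ (m + 2)) := by
    rw [div_eq_mul_one_div, mul_comm, ← kSumScale_sq, ← mul_pow]
    exact pow_le_pow_left₀ (alphaKS_nonneg s) (alphaKS_le s) 2
  have hfact : (2 : ℝ) ^ (m + 1) ≤ 2 * (m + 1)! := by
    exact_mod_cast Nat.two_pow_le_two_mul_factorial (Nat.le_add_left 1 m)
  have hpA := pow_mul_kSumThreshold_pow (k := m + 2) (n := n) hp.ne'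
  calc _ ≤ p * ((2 * p * A) ^ (m + 1) / (m + 1)!) * (A ^ 2 / (4 * (n : ℝ) ^ (m + 2))) := by
        rw [show m + 2 - 1 = m + 1 from rfl]
        gcongr
    _ = 2 ^ (m + 1) * ((p : ℝ) ^ (m + 2) * A ^ (m + 2 + 1))
          / (4 * (n : ℝ) ^ (m + 2) * (m + 1)!) := by
        field_simp
        ring
    _ = 2 ^ (m + 1) / (4 * (m + 1)!) := by
        rw [hpA]
        field_simp
    _ ≤ 1 / 2 := by
        rw [div_le_div_iff₀ (by positivity) (by norm_num)]
        linarith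

end KSum

/-- Feasibility of the dual solution for the `Ω((n/p)^{k/(k+1)})` parallel lower bound
for the `k`-sum problem (for `n` sufficiently large); `t = |J|`. -/
theorem stmt_15 (k : ℕ) (hk : 2 ≤ k) :
    ∃ N : ℕ, ∀ n p : ℕ, N ≤ n → 1 ≤ p → p ≤ n →
      ∀ s t : ℕ, 1 ≤ t → t ≤ p →
        (∑ ℓ ∈ Finset.range k, ((s + t).choose ℓ : ℝ)) *
            (alphaKS k n p s - alphaKS k n p (s + t)) ^ 2 +
          (t : ℝ) * ((s + t - 1).choose (k - 1) : ℝ) * (alphaKS k n p s) ^ 2 ≤ 1 := by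
  refine ⟨k * 2 ^ k, fun n p hn hp hpn s t _ htp => ?_⟩
  rcases le_or_gt ((p : ℝ) * kSumThreshold k n p) s with hs | hs
  · have hst : (p : ℝ) * kSumThreshold k n p ≤ (s + t : ℕ) :=
      hs.trans (by exact_mod_cast le_self_add)
    rw [alphaKS_eq_zero hp hs, alphaKS_eq_zero hp hst]
    norm_num
  · have hsn : s ≤ n := by
      exact_mod_cast hs.le.trans (mul_kSumThreshold_le (k := k) hp hpn)
    linarith [sum_choose_mul_alphaKS_sub_sq_le (k := k) (by omega) (by omega) hsn htp hpn,
      mul_choose_mul_alphaKS_sq_le hk hp hs htp hpn]
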